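/- arXiv:2401.10553 — 9 statements merged into one kernel-verified Lean document; each statement's English description precedes it below -/
import Mathlib

section
/- In a single-set cubical ω-category, for any i and any x with δ_i^- x = x, the symmetry satisfies δ_{i+1}^α (s_i x) = s_i (δ_i^α x) for α ∈ {-,+}. -/
/-- A single-set cubical ω-category: for each direction `i`, face maps
`δ i α` (with `α = false` for `-` and `α = true` for `+`) and a partial
composition `comp i` (understood as defined exactly when
`δ i true x = δ i false y`; all axioms are guarded accordingly), together with
symmetry maps `s i` and reverse symmetry maps `si i`.  The fixed-point set
`S^i` is `{x | δ i false x = x}`. -/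
structure CubicalOmegaCat (S : Type*) where
  δ : ℕ → Bool → S → S
  comp : ℕ → S → S → S
  s : ℕ → S → S
  si : ℕ → S → S
  comp_src : ∀ i x y, δ i true x = δ i false y →
    δ i false (comp i x y) = δ i false x
  comp_tgt : ∀ i x y, δ i true x = δ i false y →
    δ i true (comp i x y) = δ i true y
  tgt_unit : ∀ i x, comp i x (δ i true x) = x
  src_unit : ∀ i x, comp i (δ i false x) x = x
  assoc : ∀ i x y z, δ i true x = δ i false y → δ i true y = δ i false z →
    comp i x (comp i y z) = comp i (comp i x y) z
  src_fix : ∀ i x, δ i true (δ i false x) = δ i false x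
  tgt_fix : ∀ i x, δ i false (δ i true x) = δ i true x
  face_comm : ∀ i j α β x, i ≠ j → δ i α (δ j β x) = δ j β (δ i α x)
  face_func : ∀ i j α x y, i ≠ j → δ j true x = δ j false y →
    δ i α (comp j x y) = comp j (δ i α x) (δ i α y)
  interchange : ∀ i j w x y z, i ≠ j →
    δ i true w = δ i false x → δ i true y = δ i false z →
    δ j true w = δ j false y → δ j true x = δ j false z →
    comp j (comp i w x) (comp i y z) = comp i (comp j w y) (comp j x z)
  sym_type : ∀ i x, δ i false x = x → δ (i+1) false (s i x) = s i x
  inv_sym_type : ∀ i x, δ (i+1) false x = x → δ i false (si i x) = si i x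
  inv_sym_sym : ∀ i x, δ i false x = x → si i (s i x) = x
  sym_inv_sym : ∀ i x, δ (i+1) false x = x → s i (si i x) = x
  sym_face1 : ∀ i α x, δ i false x = x → δ i α (s i x) = s i (δ (i+1) α x)
  sym_face2 : ∀ i j α x, i ≠ j → i ≠ j + 1 → δ j false x = x →
    δ i α (s j x) = s j (δ i α x)
  sym_comp1 : ∀ i x y, δ i false x = x → δ i false y = y →
    δ (i+1) true x = δ (i+1) false y →
    s i (comp (i+1) x y) = comp i (s i x) (s i y)
  sym_comp2 : ∀ i j x y, j ≠ i → j ≠ i + 1 → δ i false x = x → δ i false y = y →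
    δ j true x = δ j false y →
    s i (comp j x y) = comp j (s i x) (s i y)
  sym_fix : ∀ i x, δ i false x = x → δ (i+1) false x = x → s i x = x
  sym_braid : ∀ i j x, i + 2 ≤ j ∨ j + 2 ≤ i → δ i false x = x →
    δ j false x = x → s i (s j x) = s j (s i x)
  fin_dim : ∀ x : S, ∃ k : ℕ, ∀ i, k ≤ i → δ i false x = x

theorem sym_face_shift {S : Type*} (C : CubicalOmegaCat S) :
    ∀ (i : ℕ) (α : Bool) (x : S), C.δ i false x = x →
      C.δ (i+1) α (C.s i x) = C.s i (C.δ i α x) := by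
  intro i α x hx
  have hs : C.δ (i+1) false (C.s i x) = C.s i x := C.sym_type i x hx
  have hxα : C.δ i α x = x := by
    cases α
    · exact hx
    · rw [← hx, C.src_fix, hx]
  have hsα : C.δ (i+1) α (C.s i x) = C.s i x := by
    cases α
    · exact hs
    · rw [← hs, C.src_fix, hs]
  rw [hxα, hsα]
end

section
/- In a single-set cubical ω-category, the symmetries satisfy the Yang–Baxter relation: s_i s_{i+1} s_i x = s_{i+1} s_i s_{i+1} x for every x ∈ S^i ∩ S^{i+1}. -/
theorem sym_yang_baxter {S : Type*} (C : CubicalOmegaCat S) :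
    ∀ (i : ℕ) (x : S), C.δ i false x = x → C.δ (i+1) false x = x →
      C.s i (C.s (i+1) (C.s i x)) = C.s (i+1) (C.s i (C.s (i+1) x)) := by
  intro i x hx1 hx2
  -- since x ∈ S^i ∩ S^{i+1}, s i x = x
  have hsx : C.s i x = x := C.sym_fix i x hx1 hx2
  set y := C.s (i+1) x with hy
  -- y ∈ S^i
  have hyi : C.δ i false y = y := by
    rw [hy, C.sym_face2 i (i+1) false x (by omega) (by omega) hx2, hx1]
  -- y ∈ S^{i+2}
  have hyi2 : C.δ (i+1+1) false y = y := C.sym_type (i+1) x hx2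
  -- s i y ∈ S^{i+1}
  have h1 : C.δ (i+1) false (C.s i y) = C.s i y := C.sym_type i y hyi
  -- s i y ∈ S^{i+2}
  have h2 : C.δ (i+1+1) false (C.s i y) = C.s i y := by
    rw [C.sym_face2 (i+2) i false y (by omega) (by omega) hyi, hyi2]
  rw [hsx]
  exact (C.sym_fix (i+1) (C.s i y) h1 h2).symm
end

section
/- In a single-set cubical ω-category, for x, y ∈ S^{i+1} with x ∘_j y defined: s̃_i(x ∘_i y) = s̃_i x ∘_{i+1} s̃_i y when j = i; s̃_i(x ∘_{i+1} y) = s̃_i x ∘_i s̃_i y when j = i+1; and s̃_i(x ∘_j y) = s̃_i x ∘_j s̃_i y otherwise. -/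
private lemma s_inj {S : Type*} (C : CubicalOmegaCat S) (i : ℕ) {u v : S}
    (hu : C.δ i false u = u) (hv : C.δ i false v = v) (h : C.s i u = C.s i v) :
    u = v := by
  have := congrArg (C.si i) h
  rwa [C.inv_sym_sym i u hu, C.inv_sym_sym i v hv] at this

theorem inv_sym_comp {S : Type*} (C : CubicalOmegaCat S) :
    ∀ (i : ℕ) (x y : S), C.δ (i+1) false x = x → C.δ (i+1) false y = y →
      (C.δ i true x = C.δ i false y →
        C.si i (C.comp i x y) = C.comp (i+1) (C.si i x) (C.si i y)) ∧
      (C.δ (i+1) true x = C.δ (i+1) false y →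
        C.si i (C.comp (i+1) x y) = C.comp i (C.si i x) (C.si i y)) ∧
      (∀ j : ℕ, j ≠ i → j ≠ i + 1 → C.δ j true x = C.δ j false y →
        C.si i (C.comp j x y) = C.comp j (C.si i x) (C.si i y)) := by
  intro i x y hx hy
  set a := C.si i x with ha
  set b := C.si i y with hb
  have haS : C.δ i false a = a := C.inv_sym_type i x hx
  have hbS : C.δ i false b = b := C.inv_sym_type i y hy
  have hsa : C.s i a = x := C.sym_inv_sym i x hx
  have hsb : C.s i b = y := C.sym_inv_sym i y hy
  have hii1 : i ≠ i + 1 := by omega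
  refine ⟨?_, ?_, ?_⟩
  · intro h
    -- transfer the composability condition
    have h1 : C.s i (C.δ (i+1) true a) = C.s i (C.δ (i+1) false b) := by
      rw [← C.sym_face1 i true a haS, ← C.sym_face1 i false b hbS, hsa, hsb, h]
    have hfa : C.δ i false (C.δ (i+1) true a) = C.δ (i+1) true a := by
      rw [C.face_comm i (i+1) false true a hii1, haS]
    have hfb : C.δ i false (C.δ (i+1) false b) = C.δ (i+1) false b := by
      rw [C.face_comm i (i+1) false false b hii1, hbS]
    have hab : C.δ (i+1) true a = C.δ (i+1) false b := s_inj C i hfa hfb h1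
    have hc : C.s i (C.comp (i+1) a b) = C.comp i x y := by
      rw [C.sym_comp1 i a b haS hbS hab, hsa, hsb]
    have hcS : C.δ i false (C.comp (i+1) a b) = C.comp (i+1) a b := by
      rw [C.face_func i (i+1) false a b hii1 hab, haS, hbS]
    rw [← hc, C.inv_sym_sym i _ hcS]
  · intro h
    -- here x is degenerate in direction i+1, forcing y = x
    have h2 : C.δ (i+1) true x = x := by
      conv_lhs => rw [← hx]
      rw [C.src_fix]; exact hx
    have hyx : y = x := by rw [← hy, ← h, h2]
    have h3 : C.comp (i+1) x y = x := by
      rw [hyx]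
      nth_rewrite 2 [← h2]
      exact C.tgt_unit (i+1) x
    have h4 : C.δ i true a = a := by
      conv_lhs => rw [← haS]
      rw [C.src_fix]; exact haS
    have hba : b = a := by rw [hb, ha, hyx]
    have h5 : C.comp i a b = a := by
      rw [hba]
      nth_rewrite 2 [← h4]
      exact C.tgt_unit i a
    rw [h3, h5]
  · intro j hj1 hj2 h
    have hij : i ≠ j := fun e => hj1 e.symm
    have h1 : C.s i (C.δ j true a) = C.s i (C.δ j false b) := by
      rw [← C.sym_face2 j i true a hj1 hj2 haS, ← C.sym_face2 j i false b hj1 hj2 hbS,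
        hsa, hsb, h]
    have hfa : C.δ i false (C.δ j true a) = C.δ j true a := by
      rw [C.face_comm i j false true a hij, haS]
    have hfb : C.δ i false (C.δ j false b) = C.δ j false b := by
      rw [C.face_comm i j false false b hij, hbS]
    have hab : C.δ j true a = C.δ j false b := s_inj C i hfa hfb h1
    have hc : C.s i (C.comp j a b) = C.comp j x y := by
      rw [C.sym_comp2 i j a b hj1 hj2 haS hbS hab, hsa, hsb]
    have hcS : C.δ i false (C.comp j a b) = C.comp j a b := by
      rw [C.face_func i j false a b hij hab, haS, hbS]
    rw [← hc, C.inv_sym_sym i _ hcS]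
end

section
/- In a single-set cubical ω-category, the reverse symmetries satisfy the Yang–Baxter relation s̃_i s̃_{i+1} s̃_i x = s̃_{i+1} s̃_i s̃_{i+1} x for every x ∈ S^{i+1} ∩ S^{i+2}. -/
/-- Reverse symmetries commute with faces in directions other than `j, j+1`. -/
lemma CubicalOmegaCat.inv_sym_face2 {S : Type*} (C : CubicalOmegaCat S)
    (i j : ℕ) (hij : i ≠ j) (hij1 : i ≠ j + 1) (x : S)
    (hx : C.δ (j+1) false x = x) :
    C.δ i false (C.si j x) = C.si j (C.δ i false x) := by
  have hu : C.δ j false (C.si j x) = C.si j x := C.inv_sym_type j x hx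
  have hsu : C.s j (C.si j x) = x := C.sym_inv_sym j x hx
  have hf : C.δ i false x = C.s j (C.δ i false (C.si j x)) := by
    conv_lhs => rw [← hsu]
    exact C.sym_face2 i j false (C.si j x) hij hij1 hu
  have hmem : C.δ j false (C.δ i false (C.si j x)) = C.δ i false (C.si j x) := by
    rw [C.face_comm j i false false (C.si j x) (fun h => hij h.symm), hu]
  rw [hf, C.inv_sym_sym j _ hmem]

theorem inv_sym_yang_baxter {S : Type*} (C : CubicalOmegaCat S) :
    ∀ (i : ℕ) (x : S), C.δ (i+1) false x = x → C.δ (i+2) false x = x →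
      C.si i (C.si (i+1) (C.si i x)) = C.si (i+1) (C.si i (C.si (i+1) x)) := by
  intro i x h1 h2
  have hsfix : C.s (i+1) x = x := C.sym_fix (i+1) x h1 h2
  have hsi1x : C.si (i+1) x = x := by
    have := C.inv_sym_sym (i+1) x h1
    rwa [hsfix] at this
  have hu : C.δ i false (C.si i x) = C.si i x := C.inv_sym_type i x h1
  have hu2 : C.δ (i+2) false (C.si i x) = C.si i x := by
    rw [C.inv_sym_face2 (i+2) i (by omega) (by omega) x h1, h2]
  have hv1 : C.δ (i+1) false (C.si (i+1) (C.si i x)) = C.si (i+1) (C.si i x) :=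
    C.inv_sym_type (i+1) (C.si i x) hu2
  have hv0 : C.δ i false (C.si (i+1) (C.si i x)) = C.si (i+1) (C.si i x) := by
    rw [C.inv_sym_face2 i (i+1) (by omega) (by omega) (C.si i x) hu2, hu]
  have hsv : C.s i (C.si (i+1) (C.si i x)) = C.si (i+1) (C.si i x) :=
    C.sym_fix i _ hv0 hv1
  have hfinal : C.si i (C.si (i+1) (C.si i x)) = C.si (i+1) (C.si i x) := by
    have := C.inv_sym_sym i _ hv0
    rwa [hsv] at this
  rw [hsi1x, hfinal]
end

section
/- In a single-set cubical ω-category with connections, δ_j^α(γ_j^{−α} x) = δ_{j+1}^α x and δ_{j+1}^α(γ_j^{−α} x) = δ_{j+1}^α x, for every x ∈ S^j, where −α denotes the opposite sign of α. -/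
/-- A single-set cubical ω-category with connections `γ i α`. -/
structure CubicalOmegaCatConn (S : Type*) extends CubicalOmegaCat S where
  γ : ℕ → Bool → S → S
  conn_face1 : ∀ j α x, δ j false x = x → δ j α (γ j α x) = x
  conn_face2 : ∀ j α x, δ j false x = x → δ (j+1) α (γ j α x) = s j x
  conn_face3 : ∀ i j α β x, i ≠ j → i ≠ j + 1 → δ j false x = x →
    δ i α (γ j β x) = γ j β (δ i α x)
  conn_corner_p : ∀ i x y, δ i false x = x → δ i false y = y →
    δ (i+1) true x = δ (i+1) false y →
    γ i true (comp (i+1) x y) =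
      comp i (comp (i+1) (γ i true x) (s i x)) (comp (i+1) x (γ i true y))
  conn_corner_m : ∀ i x y, δ i false x = x → δ i false y = y →
    δ (i+1) true x = δ (i+1) false y →
    γ i false (comp (i+1) x y) =
      comp i (comp (i+1) (γ i false x) y) (comp (i+1) (s i y) (γ i false y))
  conn_corner3 : ∀ i j α x y, j ≠ i → j ≠ i + 1 → δ i false x = x →
    δ i false y = y → δ j true x = δ j false y →
    γ i α (comp j x y) = comp j (γ i α x) (γ i α y)
  conn_fix : ∀ i α x, δ i false x = x → δ (i+1) false x = x → γ i α x = x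
  conn_zigzag1 : ∀ i x, δ i false x = x →
    comp (i+1) (γ i true x) (γ i false x) = x
  conn_zigzag2 : ∀ i x, δ i false x = x →
    comp i (γ i true x) (γ i false x) = s i x
  conn_braid : ∀ i j α β x, i + 2 ≤ j ∨ j + 2 ≤ i → δ i false x = x →
    δ j false x = x → γ i α (γ j β x) = γ j β (γ i α x)
  conn_shift : ∀ i α x, δ i false x = x → δ (i+1) false x = x →
    s (i+1) (s i (γ (i+1) α x)) = γ i α (s (i+1) x)

theorem conn_opposite_faces {S : Type*} (C : CubicalOmegaCatConn S) :
    ∀ (j : ℕ) (α : Bool) (x : S), C.δ j false x = x →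
      C.δ j α (C.γ j (!α) x) = C.δ (j+1) α x ∧
      C.δ (j+1) α (C.γ j (!α) x) = C.δ (j+1) α x := by
  intro j α x hx
  -- δ i false is idempotent
  have hidem : ∀ (i : ℕ) (y : S), C.δ i false (C.δ i false y) = C.δ i false y := by
    intro i y
    have h := C.comp_src i (C.δ i false y) y (C.src_fix i y)
    rw [C.src_unit] at h
    exact h.symm
  -- s j fixes δ (j+1) β x
  have hsfix : ∀ β : Bool, C.s j (C.δ (j+1) β x) = C.δ (j+1) β x := by
    intro β
    apply C.sym_fix
    · rw [C.face_comm j (j+1) false β x (by omega), hx]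
    · cases β
      · exact hidem (j+1) x
      · exact C.tgt_fix (j+1) x
  have hf1p := C.conn_face1 j true x hx
  have hf1m := C.conn_face1 j false x hx
  have hf2p := C.conn_face2 j true x hx
  have hf2m := C.conn_face2 j false x hx
  have hz1 := C.conn_zigzag1 j x hx
  have hz2 := C.conn_zigzag2 j x hx
  have hc : C.δ j true (C.γ j true x) = C.δ j false (C.γ j false x) := by
    rw [hf1p, hf1m]
  have hc' : C.δ (j+1) true (C.γ j true x) = C.δ (j+1) false (C.γ j false x) := by
    rw [hf2p, hf2m]
  cases α with
  | false =>
    simp only [Bool.not_false]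
    constructor
    · have h := C.comp_src j (C.γ j true x) (C.γ j false x) hc
      rw [hz2] at h
      rw [← h, C.sym_face1 j false x hx, hsfix false]
    · have h := C.comp_src (j+1) (C.γ j true x) (C.γ j false x) hc'
      rw [hz1] at h
      exact h.symm
  | true =>
    simp only [Bool.not_true]
    constructor
    · have h := C.comp_tgt j (C.γ j true x) (C.γ j false x) hc
      rw [hz2] at h
      rw [← h, C.sym_face1 j true x hx, hsfix true]
    · have h := C.comp_tgt (j+1) (C.γ j true x) (C.γ j false x) hc'
      rw [hz1] at h
      exact h.symm
end

section
/- In a single-set cubical ω-category with connections, for x, y ∈ S^i with x ∘_{i+1} y defined: γ_i^+(x ∘_{i+1} y) = (γ_i^+ x ∘_i x) ∘_{i+1} (s_i x ∘_i γ_i^+ y) and γ_i^-(x ∘_{i+1} y) = (γ_i^- x ∘_i s_i y) ∘_{i+1} (y ∘_i γ_i^- y). -/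
theorem conn_corner_alt {S : Type*} (C : CubicalOmegaCatConn S) :
    ∀ (i : ℕ) (x y : S), C.δ i false x = x → C.δ i false y = y →
      C.δ (i+1) true x = C.δ (i+1) false y →
      C.γ i true (C.comp (i+1) x y) =
        C.comp (i+1) (C.comp i (C.γ i true x) x)
          (C.comp i (C.s i x) (C.γ i true y)) ∧
      C.γ i false (C.comp (i+1) x y) =
        C.comp (i+1) (C.comp i (C.γ i false x) (C.s i y))
          (C.comp i y (C.γ i false y)) := by
  intro i x y hx hy hxy
  -- fixed points have equal true faces
  have sfix : ∀ (j : ℕ) (z : S), C.δ j false z = z → C.δ j true z = z := by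
    intro j z hz
    conv_lhs => rw [← hz]
    rw [C.src_fix, hz]
  have hxt : C.δ i true x = x := sfix i x hx
  have hyt : C.δ i true y = y := sfix i y hy
  -- faces of connections (matching sign)
  have hγpx1 : C.δ i true (C.γ i true x) = x := C.conn_face1 i true x hx
  have hγpy1 : C.δ i true (C.γ i true y) = y := C.conn_face1 i true y hy
  have hγmx1 : C.δ i false (C.γ i false x) = x := C.conn_face1 i false x hx
  have hγmy1 : C.δ i false (C.γ i false y) = y := C.conn_face1 i false y hy
  have hγpx2 : C.δ (i+1) true (C.γ i true x) = C.s i x := C.conn_face2 i true x hx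
  have hγpy2 : C.δ (i+1) true (C.γ i true y) = C.s i y := C.conn_face2 i true y hy
  have hγmx2 : C.δ (i+1) false (C.γ i false x) = C.s i x := C.conn_face2 i false x hx
  have hγmy2 : C.δ (i+1) false (C.γ i false y) = C.s i y := C.conn_face2 i false y hy
  -- composability of zigzags
  have hz1x : C.δ (i+1) true (C.γ i true x) = C.δ (i+1) false (C.γ i false x) := by
    rw [hγpx2, hγmx2]
  have hz1y : C.δ (i+1) true (C.γ i true y) = C.δ (i+1) false (C.γ i false y) := by
    rw [hγpy2, hγmy2]
  have hz2x : C.δ i true (C.γ i true x) = C.δ i false (C.γ i false x) := by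
    rw [hγpx1, hγmx1]
  have hz2y : C.δ i true (C.γ i true y) = C.δ i false (C.γ i false y) := by
    rw [hγpy1, hγmy1]
  -- s i x, s i y are in S^{i+1}
  have hsx : C.δ (i+1) false (C.s i x) = C.s i x := C.sym_type i x hx
  have hsy : C.δ (i+1) false (C.s i y) = C.s i y := C.sym_type i y hy
  have hsxt : C.δ (i+1) true (C.s i x) = C.s i x := sfix (i+1) _ hsx
  have hsyt : C.δ (i+1) true (C.s i y) = C.s i y := sfix (i+1) _ hsy
  have hne : i ≠ i + 1 := Nat.ne_of_lt (Nat.lt_succ_self i)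
  -- mismatched-sign faces of connections, via zigzags
  have hγpy_if : C.δ i false (C.γ i true y) = C.s i (C.δ (i+1) false y) := by
    have h := C.comp_src i (C.γ i true y) (C.γ i false y) hz2y
    rw [C.conn_zigzag2 i y hy] at h
    rw [← h, C.sym_face1 i false y hy]
  have hγpy_ip1f : C.δ (i+1) false (C.γ i true y) = C.δ (i+1) false y := by
    have h := C.comp_src (i+1) (C.γ i true y) (C.γ i false y) hz1y
    rw [C.conn_zigzag1 i y hy] at h
    exact h.symm
  have hγmx_it : C.δ i true (C.γ i false x) = C.s i (C.δ (i+1) true x) := by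
    have h := C.comp_tgt i (C.γ i true x) (C.γ i false x) hz2x
    rw [C.conn_zigzag2 i x hx] at h
    rw [← h, C.sym_face1 i true x hx]
  have hγmx_ip1t : C.δ (i+1) true (C.γ i false x) = C.δ (i+1) true x := by
    have h := C.comp_tgt (i+1) (C.γ i true x) (C.γ i false x) hz1x
    rw [C.conn_zigzag1 i x hx] at h
    exact h.symm
  constructor
  · -- plus case
    rw [C.conn_corner_p i x y hx hy hxy]
    refine (C.interchange i (i+1) (C.γ i true x) x (C.s i x) (C.γ i true y) hne
      ?_ ?_ ?_ ?_).symm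
    · rw [hγpx1, hx]
    · rw [C.sym_face1 i true x hx, hγpy_if, hxy]
    · rw [hγpx2, hsx]
    · rw [hγpy_ip1f, hxy]
  · -- minus case
    rw [C.conn_corner_m i x y hx hy hxy]
    refine (C.interchange i (i+1) (C.γ i false x) (C.s i y) y (C.γ i false y) hne
      ?_ ?_ ?_ ?_).symm
    · rw [hγmx_it, C.sym_face1 i false y hy, hxy]
    · rw [hγmy1, hyt]
    · rw [hγmx_ip1t, hxy]
    · rw [hγmy2, hsyt]
end

section
/- In a single-set cubical (ω,p)-category, if x is r_i-invertible with inverse r_i x, then δ_i^α(r_i x) = δ_i^{−α} x, and for j ≠ i, δ_j^α(r_i x) = r_i(δ_j^α x) whenever δ_j^α x is r_i-invertible. -/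
/-- `y` is an `r_i`-inverse of `x`: both composites `x ∘_i y` and `y ∘_i x`
are defined, `x ∘_i y = δ_i^- x` and `y ∘_i x = δ_i^+ x`. -/
def riInv {S : Type*} (δ : ℕ → Bool → S → S) (comp : ℕ → S → S → S)
    (i : ℕ) (x y : S) : Prop :=
  δ i true x = δ i false y ∧ δ i true y = δ i false x ∧
  comp i x y = δ i false x ∧ comp i y x = δ i true x

/-- A single-set cubical `(ω,p)`-category (with connections): every cell in
`S^{>n}` (for `n ≥ p+1`) with an `r_i`-invertible shell is `r_i`-invertible,
for `1 ≤ i ≤ n`. -/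
structure CubicalOmegaPCat (S : Type*) (p : ℕ) extends CubicalOmegaCatConn S where
  ri_axiom : ∀ n i x, p + 1 ≤ n → 1 ≤ i → i ≤ n →
    (∀ m, n + 1 ≤ m → δ m false x = x) →
    (∀ j α, 1 ≤ j → j ≤ n → j ≠ i → ∃ y, riInv δ comp i (δ j α x) y) →
    ∃ y, riInv δ comp i x y

theorem ri_inv_faces {S : Type*} {p : ℕ} (C : CubicalOmegaPCat S p) :
    ∀ (i : ℕ) (x y : S), riInv C.δ C.comp i x y →
      (∀ α : Bool, C.δ i α y = C.δ i (!α) x) ∧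
      (∀ (j : ℕ) (α : Bool) (z : S), j ≠ i →
        riInv C.δ C.comp i (C.δ j α x) z → C.δ j α y = z) := by
  -- uniqueness of r_i-inverses
  have uniq : ∀ (i : ℕ) (a w z : S), riInv C.δ C.comp i a w →
      riInv C.δ C.comp i a z → w = z := by
    intro i a w z hw hz
    obtain ⟨hw1, hw2, hw3, hw4⟩ := hw
    obtain ⟨hz1, hz2, hz3, hz4⟩ := hz
    calc w = C.comp i (C.δ i false w) w := (C.src_unit i w).symm
      _ = C.comp i (C.comp i z a) w := by rw [hz4, ← hw1]
      _ = C.comp i z (C.comp i a w) := (C.assoc i z a w hz2 hw1).symm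
      _ = C.comp i z (C.δ i true z) := by rw [hw3, ← hz2]
      _ = z := C.tgt_unit i z
  intro i x y hxy
  obtain ⟨h1, h2, h3, h4⟩ := hxy
  constructor
  · intro α; cases α
    · exact h1.symm
    · exact h2
  · intro j α z hji hz
    refine uniq i (C.δ j α x) (C.δ j α y) z ?_ hz
    refine ⟨?_, ?_, ?_, ?_⟩
    · rw [C.face_comm i j true α x hji.symm, C.face_comm i j false α y hji.symm, h1]
    · rw [C.face_comm i j true α y hji.symm, C.face_comm i j false α x hji.symm, h2]
    · rw [← C.face_func j i α x y hji h1, h3,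
        C.face_comm i j false α x hji.symm]
    · rw [← C.face_func j i α y x hji h2, h4,
        C.face_comm i j true α x hji.symm]
end

section
/- In a single-set cubical (ω,p)-category, if x ∈ S^{>n} (i.e. δ_m^- x = x for all m ≥ n+1) is r_i-invertible, then its inverse r_i x also lies in S^{>n}. -/
/-- Uniqueness of `r_i`-inverses. -/
lemma riInv_unique {S : Type*} (C : CubicalOmegaCat S) (i : ℕ) (x y y' : S)
    (h : riInv C.δ C.comp i x y) (h' : riInv C.δ C.comp i x y') : y = y' := by
  obtain ⟨h1, h2, h3, h4⟩ := h
  obtain ⟨h1', h2', h3', h4'⟩ := h'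
  calc y = C.comp i y (C.δ i true y) := (C.tgt_unit i y).symm
    _ = C.comp i y (C.comp i x y') := by rw [h3', h2]
    _ = C.comp i (C.comp i y x) y' := C.assoc i y x y' (by rw [h2]) h1'
    _ = C.comp i (C.δ i false y') y' := by rw [h4, h1']
    _ = y' := C.src_unit i y'

theorem ri_inv_dim_bound {S : Type*} {p : ℕ} (C : CubicalOmegaPCat S p) :
    ∀ (n i : ℕ) (x y : S), (∀ m, n + 1 ≤ m → C.δ m false x = x) →
      riInv C.δ C.comp i x y →
      ∀ m, n + 1 ≤ m → C.δ m false y = y := by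
  intro n i x y hx hy m hm
  obtain ⟨h1, h2, h3, h4⟩ := hy
  by_cases hmi : m = i
  · subst hmi
    have hxfix : C.δ m false x = x := hx m hm
    have hy_eq : y = x := by
      have : C.comp m (C.δ m false y) y = y := C.src_unit m y
      have hδy : C.δ m false y = x := by
        rw [← h1]
        calc C.δ m true x = C.δ m true (C.δ m false x) := by rw [hxfix]
          _ = C.δ m false x := C.src_fix m x
          _ = x := hxfix
      rw [hδy] at this
      rw [← this, h3, hxfix]
    rw [hy_eq]; exact hxfix
  · have hxfix : C.δ m false x = x := hx m hm
    have hinv : riInv C.δ C.comp i x (C.δ m false y) := by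
      refine ⟨?_, ?_, ?_, ?_⟩
      · calc C.δ i true x = C.δ i true (C.δ m false x) := by rw [hxfix]
          _ = C.δ m false (C.δ i true x) := C.face_comm i m true false x (fun h => hmi h.symm)
          _ = C.δ m false (C.δ i false y) := by rw [h1]
          _ = C.δ i false (C.δ m false y) := (C.face_comm i m false false y (fun h => hmi h.symm)).symm
      · calc C.δ i true (C.δ m false y)
            = C.δ m false (C.δ i true y) := C.face_comm i m true false y (fun h => hmi h.symm)
          _ = C.δ m false (C.δ i false x) := by rw [h2]
          _ = C.δ i false (C.δ m false x) := (C.face_comm i m false false x (fun h => hmi h.symm)).symm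
          _ = C.δ i false x := by rw [hxfix]
      · calc C.comp i x (C.δ m false y)
            = C.comp i (C.δ m false x) (C.δ m false y) := by rw [hxfix]
          _ = C.δ m false (C.comp i x y) := (C.face_func m i false x y (fun h => hmi h) h1).symm
          _ = C.δ m false (C.δ i false x) := by rw [h3]
          _ = C.δ i false (C.δ m false x) := (C.face_comm i m false false x (fun h => hmi h.symm)).symm
          _ = C.δ i false x := by rw [hxfix]
      · calc C.comp i (C.δ m false y) x
            = C.comp i (C.δ m false y) (C.δ m false x) := by rw [hxfix]
          _ = C.δ m false (C.comp i y x) := (C.face_func m i false y x (fun h => hmi h) h2).symm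
          _ = C.δ m false (C.δ i true x) := by rw [h4]
          _ = C.δ i true (C.δ m false x) := (C.face_comm i m true false x (fun h => hmi h.symm)).symm
          _ = C.δ i true x := by rw [hxfix]
    exact (riInv_unique C.toCubicalOmegaCat i x y (C.δ m false y) ⟨h1, h2, h3, h4⟩ hinv).symm
end

section
/- In a single-set cubical (ω,0)-category, every cell is r_i-invertible for every direction i ≥ 1. -/
section Aux

attribute [local instance 10] Classical.propDecidable

variable {S : Type*} (C : CubicalOmegaPCat S 0)

lemma delta_true_of_false {k : ℕ} {x : S} (h : C.δ k false x = x) :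
    C.δ k true x = x := by
  have h1 := C.src_fix k x
  rw [h] at h1
  exact h1

lemma delta_idem (k : ℕ) (α : Bool) (x : S) :
    C.δ k false (C.δ k α x) = C.δ k α x := by
  cases α with
  | true => exact C.tgt_fix k x
  | false =>
    have h1 := C.tgt_fix k (C.δ k false x)
    rw [C.src_fix k x] at h1
    exact h1

lemma riInv_self {i : ℕ} {x : S} (h : C.δ i false x = x) :
    riInv C.δ C.comp i x x := by
  have ht : C.δ i true x = x := delta_true_of_false C h
  have h2 := C.src_unit i x
  rw [h] at h2
  have h3 := C.tgt_unit i x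
  rw [ht] at h3
  exact ⟨by rw [ht, h], by rw [ht, h], by rw [h2]; exact h.symm,
    by rw [h3]; exact ht.symm⟩

lemma riInv_unique_s19 {i : ℕ} {x z z' : S}
    (hz : riInv C.δ C.comp i x z) (hz' : riInv C.δ C.comp i x z') : z = z' := by
  obtain ⟨a1, a2, a3, a4⟩ := hz
  obtain ⟨b1, b2, b3, b4⟩ := hz'
  calc z = C.comp i z (C.δ i true z) := (C.tgt_unit i z).symm
    _ = C.comp i z (C.δ i false x) := by rw [a2]
    _ = C.comp i z (C.comp i x z') := by rw [b3]
    _ = C.comp i (C.comp i z x) z' := C.assoc i z x z' a2 b1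
    _ = C.comp i (C.δ i true x) z' := by rw [a4]
    _ = C.comp i (C.δ i false z') z' := by rw [b1]
    _ = z' := C.src_unit i z'

lemma riInv_face {i k : ℕ} (α : Bool) {x z : S} (hki : k ≠ i)
    (hx : C.δ k false x = x) (hz : riInv C.δ C.comp i x z) :
    riInv C.δ C.comp i x (C.δ k α z) := by
  have hxα : C.δ k α x = x := by
    cases α with
    | false => exact hx
    | true => exact delta_true_of_false C hx
  obtain ⟨a1, a2, a3, a4⟩ := hz
  refine ⟨?_, ?_, ?_, ?_⟩
  · calc C.δ i true x = C.δ i true (C.δ k α x) := by rw [hxα]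
      _ = C.δ k α (C.δ i true x) := C.face_comm i k true α x (Ne.symm hki)
      _ = C.δ k α (C.δ i false z) := by rw [a1]
      _ = C.δ i false (C.δ k α z) := (C.face_comm i k false α z (Ne.symm hki)).symm
  · calc C.δ i true (C.δ k α z) = C.δ k α (C.δ i true z) :=
        C.face_comm i k true α z (Ne.symm hki)
      _ = C.δ k α (C.δ i false x) := by rw [a2]
      _ = C.δ i false (C.δ k α x) := (C.face_comm i k false α x (Ne.symm hki)).symm
      _ = C.δ i false x := by rw [hxα]
  · calc C.comp i x (C.δ k α z) = C.comp i (C.δ k α x) (C.δ k α z) := by rw [hxα]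
      _ = C.δ k α (C.comp i x z) := (C.face_func k i α x z hki a1).symm
      _ = C.δ k α (C.δ i false x) := by rw [a3]
      _ = C.δ i false (C.δ k α x) := (C.face_comm i k false α x (Ne.symm hki)).symm
      _ = C.δ i false x := by rw [hxα]
  · calc C.comp i (C.δ k α z) x = C.comp i (C.δ k α z) (C.δ k α x) := by rw [hxα]
      _ = C.δ k α (C.comp i z x) := (C.face_func k i α z x hki a2).symm
      _ = C.δ k α (C.δ i true x) := by rw [a4]
      _ = C.δ i true (C.δ k α x) := (C.face_comm i k true α x (Ne.symm hki)).symm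
      _ = C.δ i true x := by rw [hxα]

lemma riInv_fixed {i k : ℕ} {x z : S} (hki : k ≠ i)
    (hx : C.δ k false x = x) (hz : riInv C.δ C.comp i x z) :
    C.δ k false z = z :=
  riInv_unique_s19 C (riInv_face C false hki hx hz) hz

lemma si_face1 (j : ℕ) (α : Bool) {u : S} (hu : C.δ (j+1) false u = u) :
    C.δ (j+1) α (C.si j u) = C.si j (C.δ j α u) := by
  have ha : C.δ j false (C.si j u) = C.si j u := C.inv_sym_type j u hu
  have h1 : C.δ j α u = C.s j (C.δ (j+1) α (C.si j u)) := by
    have h := C.sym_face1 j α (C.si j u) ha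
    rw [C.sym_inv_sym j u hu] at h
    exact h
  have h2 : C.δ j false (C.δ (j+1) α (C.si j u)) = C.δ (j+1) α (C.si j u) := by
    rw [C.face_comm j (j+1) false α _ (by omega), ha]
  rw [h1, C.inv_sym_sym j _ h2]

lemma si_face2 (j k : ℕ) (α : Bool) (hkj : k ≠ j) (hkj1 : k ≠ j + 1) {u : S}
    (hu : C.δ (j+1) false u = u) :
    C.δ k α (C.si j u) = C.si j (C.δ k α u) := by
  have ha : C.δ j false (C.si j u) = C.si j u := C.inv_sym_type j u hu
  have h1 : C.δ k α u = C.s j (C.δ k α (C.si j u)) := by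
    have h := C.sym_face2 k j α (C.si j u) hkj hkj1 ha
    rw [C.sym_inv_sym j u hu] at h
    exact h
  have h2 : C.δ j false (C.δ k α (C.si j u)) = C.δ k α (C.si j u) := by
    rw [C.face_comm j k false α _ (Ne.symm hkj), ha]
  rw [h1, C.inv_sym_sym j _ h2]

lemma si_comp1 (j : ℕ) {u v : S} (hu : C.δ (j+1) false u = u)
    (hv : C.δ (j+1) false v = v) (hc : C.δ j true u = C.δ j false v) :
    C.si j (C.comp j u v) = C.comp (j+1) (C.si j u) (C.si j v) := by
  have ha : C.δ j false (C.si j u) = C.si j u := C.inv_sym_type j u hu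
  have hb : C.δ j false (C.si j v) = C.si j v := C.inv_sym_type j v hv
  have hab : C.δ (j+1) true (C.si j u) = C.δ (j+1) false (C.si j v) := by
    rw [si_face1 C j true hu, si_face1 C j false hv, hc]
  have hkey := C.sym_comp1 j (C.si j u) (C.si j v) ha hb hab
  rw [C.sym_inv_sym j u hu, C.sym_inv_sym j v hv] at hkey
  have hmem : C.δ j false (C.comp (j+1) (C.si j u) (C.si j v)) =
      C.comp (j+1) (C.si j u) (C.si j v) := by
    rw [C.face_func j (j+1) false _ _ (by omega) hab, ha, hb]
  rw [← hkey, C.inv_sym_sym j _ hmem]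

lemma si_comp2 (j k : ℕ) (hkj : k ≠ j) (hkj1 : k ≠ j + 1) {u v : S}
    (hu : C.δ (j+1) false u = u) (hv : C.δ (j+1) false v = v)
    (hc : C.δ k true u = C.δ k false v) :
    C.si j (C.comp k u v) = C.comp k (C.si j u) (C.si j v) := by
  have ha : C.δ j false (C.si j u) = C.si j u := C.inv_sym_type j u hu
  have hb : C.δ j false (C.si j v) = C.si j v := C.inv_sym_type j v hv
  have hab : C.δ k true (C.si j u) = C.δ k false (C.si j v) := by
    rw [si_face2 C j k true hkj hkj1 hu, si_face2 C j k false hkj hkj1 hv, hc]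
  have hkey := C.sym_comp2 j k (C.si j u) (C.si j v) hkj hkj1 ha hb hab
  rw [C.sym_inv_sym j u hu, C.sym_inv_sym j v hv] at hkey
  have hmem : C.δ j false (C.comp k (C.si j u) (C.si j v)) =
      C.comp k (C.si j u) (C.si j v) := by
    rw [C.face_func j k false _ _ (Ne.symm hkj) hab, ha, hb]
  rw [← hkey, C.inv_sym_sym j _ hmem]

lemma transport_ne (j i : ℕ) (hij : i ≠ j) (hij1 : i ≠ j + 1) {x z : S}
    (hx : C.δ j false x = x) (hz : riInv C.δ C.comp i (C.s j x) z) :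
    ∃ w, riInv C.δ C.comp i x w := by
  have hy1 : C.δ (j+1) false (C.s j x) = C.s j x := C.sym_type j x hx
  have hzf : C.δ (j+1) false z = z := riInv_fixed C (Ne.symm hij1) hy1 hz
  obtain ⟨a1, a2, a3, a4⟩ := hz
  have hxy : C.si j (C.s j x) = x := C.inv_sym_sym j x hx
  refine ⟨C.si j z, ?_, ?_, ?_, ?_⟩
  · rw [← hxy, si_face2 C j i true hij hij1 hy1,
      si_face2 C j i false hij hij1 hzf, a1]
  · rw [← hxy, si_face2 C j i true hij hij1 hzf,
      si_face2 C j i false hij hij1 hy1, a2]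
  · rw [← hxy, ← si_comp2 C j i hij hij1 hy1 hzf a1, a3,
      si_face2 C j i false hij hij1 hy1]
  · rw [← hxy, ← si_comp2 C j i hij hij1 hzf hy1 a2, a4,
      si_face2 C j i true hij hij1 hy1]

lemma transport_succ (j : ℕ) {x z : S}
    (hx : C.δ j false x = x) (hz : riInv C.δ C.comp j (C.s j x) z) :
    ∃ w, riInv C.δ C.comp (j+1) x w := by
  have hy1 : C.δ (j+1) false (C.s j x) = C.s j x := C.sym_type j x hx
  have hzf : C.δ (j+1) false z = z := riInv_fixed C (by omega) hy1 hz
  obtain ⟨a1, a2, a3, a4⟩ := hz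
  have hxy : C.si j (C.s j x) = x := C.inv_sym_sym j x hx
  refine ⟨C.si j z, ?_, ?_, ?_, ?_⟩
  · rw [← hxy, si_face1 C j true hy1, si_face1 C j false hzf, a1]
  · rw [← hxy, si_face1 C j true hzf, si_face1 C j false hy1, a2]
  · rw [← hxy, ← si_comp1 C j hy1 hzf a1, a3, si_face1 C j false hy1]
  · rw [← hxy, ← si_comp1 C j hzf hy1 a2, a4, si_face1 C j true hy1]

lemma key_induction :
    ∀ N M i n (x : S), 1 ≤ i → i ≤ n →
    (∀ m, n + 1 ≤ m → C.δ m false x = x) →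
    ((Finset.Icc 1 n).filter (fun j => C.δ j false x ≠ x)).card ≤ N →
    ((Finset.Icc 1 n).filter (fun j => C.δ j false x ≠ x)).sum id ≤ M →
    ∃ y, riInv C.δ C.comp i x y := by
  intro N
  induction N with
  | zero =>
    intro M i n x hi hin _ hcard _
    have hfix : C.δ i false x = x := by
      by_contra h
      have hmem : i ∈ (Finset.Icc 1 n).filter (fun j => C.δ j false x ≠ x) := by
        simp only [Finset.mem_filter, Finset.mem_Icc]
        exact ⟨⟨hi, hin⟩, h⟩
      have := Finset.card_pos.mpr ⟨i, hmem⟩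
      omega
    exact ⟨x, riInv_self C hfix⟩
  | succ N ihN =>
    intro M
    induction M with
    | zero =>
      intro i n x hi hin _ _ hsum
      have hfix : C.δ i false x = x := by
        by_contra h
        have hmem : i ∈ (Finset.Icc 1 n).filter (fun j => C.δ j false x ≠ x) := by
          simp only [Finset.mem_filter, Finset.mem_Icc]
          exact ⟨⟨hi, hin⟩, h⟩
        have h2 := Finset.single_le_sum (f := id) (fun a _ => Nat.zero_le (id a)) hmem
        simp only [Function.id_def] at h2 hsum
        omega
      exact ⟨x, riInv_self C hfix⟩
    | succ M ihM =>
      intro i n x hi hin hb hcard hsum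
      by_cases hfix : C.δ i false x = x
      · exact ⟨x, riInv_self C hfix⟩
      have hiF : i ∈ (Finset.Icc 1 n).filter (fun j => C.δ j false x ≠ x) := by
        simp only [Finset.mem_filter, Finset.mem_Icc]
        exact ⟨⟨hi, hin⟩, hfix⟩
      set F := (Finset.Icc 1 n).filter (fun j => C.δ j false x ≠ x) with hFdef
      have hFne : F.Nonempty := ⟨i, hiF⟩
      set n' := F.max' hFne with hn'def
      have hn'F : n' ∈ F := F.max'_mem hFne
      have hn'prop : (1 ≤ n' ∧ n' ≤ n) ∧ C.δ n' false x ≠ x := by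
        have := hn'F
        rw [hFdef] at this
        simpa only [Finset.mem_filter, Finset.mem_Icc] using this
      have h_n'le : n' ≤ n := hn'prop.1.2
      have hin' : i ≤ n' := F.le_max' i hiF
      have hb' : ∀ m, n' + 1 ≤ m → C.δ m false x = x := by
        intro m hm
        by_cases h : m ≤ n
        · by_contra hne
          have hmem : m ∈ F := by
            rw [hFdef]
            simp only [Finset.mem_filter, Finset.mem_Icc]
            exact ⟨⟨by omega, h⟩, hne⟩
          have := F.le_max' m hmem
          omega
        · exact hb m (by omega)
      by_cases hall : ∀ j, 1 ≤ j → j ≤ n' → C.δ j false x ≠ x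
      · -- all directions in [1, n'] are free: apply the shell axiom
        refine C.ri_axiom n' i x (by omega) hi hin' hb' ?_
        intro j α hj1 hjn' hji
        have hjF : j ∈ F := by
          rw [hFdef]
          simp only [Finset.mem_filter, Finset.mem_Icc]
          exact ⟨⟨hj1, by omega⟩, hall j hj1 hjn'⟩
        have hbj : ∀ m, n' + 1 ≤ m → C.δ m false (C.δ j α x) = C.δ j α x := by
          intro m hm
          rw [C.face_comm m j false α x (by omega), hb' m hm]
        have hsub : (Finset.Icc 1 n').filter
            (fun k => C.δ k false (C.δ j α x) ≠ C.δ j α x) ⊆ F.erase j := by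
          intro k hk
          simp only [Finset.mem_filter, Finset.mem_Icc] at hk
          obtain ⟨⟨hk1, hkn'⟩, hkfree⟩ := hk
          have hkj : k ≠ j := by
            intro h
            rw [h] at hkfree
            exact hkfree (delta_idem C j α x)
          have hkx : C.δ k false x ≠ x := by
            intro h
            apply hkfree
            rw [C.face_comm k j false α x hkj, h]
          refine Finset.mem_erase.mpr ⟨hkj, ?_⟩
          rw [hFdef]
          simp only [Finset.mem_filter, Finset.mem_Icc]
          exact ⟨⟨hk1, by omega⟩, hkx⟩
        have hcardj : ((Finset.Icc 1 n').filter
            (fun k => C.δ k false (C.δ j α x) ≠ C.δ j α x)).card ≤ N := by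
          have h1 := Finset.card_le_card hsub
          have h2 : (F.erase j).card = F.card - 1 := Finset.card_erase_of_mem hjF
          have h3 : 1 ≤ F.card := Finset.card_pos.mpr ⟨j, hjF⟩
          omega
        exact ihN _ i n' (C.δ j α x) hi hin' hbj hcardj le_rfl
      · -- some direction in [1, n'] is fixed: use a symmetry swap
        push_neg at hall
        obtain ⟨j₀, hj₀1, hj₀n', hj₀fix⟩ := hall
        have hKne : ((Finset.Icc 1 n').filter
            (fun j => C.δ j false x = x)).Nonempty := by
          refine ⟨j₀, ?_⟩
          simp only [Finset.mem_filter, Finset.mem_Icc]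
          exact ⟨⟨hj₀1, hj₀n'⟩, hj₀fix⟩
        set K := (Finset.Icc 1 n').filter (fun j => C.δ j false x = x) with hKdef
        set j := K.max' hKne with hjdef
        have hjK : j ∈ K := K.max'_mem hKne
        have hjprop : (1 ≤ j ∧ j ≤ n') ∧ C.δ j false x = x := by
          have := hjK
          rw [hKdef] at this
          simpa only [Finset.mem_filter, Finset.mem_Icc] using this
        have hj1 : 1 ≤ j := hjprop.1.1
        have hjfix : C.δ j false x = x := hjprop.2
        have hjne : j ≠ n' := by
          intro h
          rw [h] at hjfix
          exact hn'prop.2 hjfix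
        have hjn' : j + 1 ≤ n' := by
          have := hjprop.1.2
          omega
        have hj1free : C.δ (j+1) false x ≠ x := by
          intro h
          have hmem : j + 1 ∈ K := by
            rw [hKdef]
            simp only [Finset.mem_filter, Finset.mem_Icc]
            exact ⟨⟨by omega, hjn'⟩, h⟩
          have := K.le_max' (j+1) hmem
          omega
        have hij : i ≠ j := by
          intro h
          rw [h] at hfix
          exact hfix hjfix
        have hj1F : j + 1 ∈ F := by
          rw [hFdef]
          simp only [Finset.mem_filter, Finset.mem_Icc]
          exact ⟨⟨by omega, by omega⟩, hj1free⟩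
        have hjnF : j ∉ F := by
          rw [hFdef]
          simp only [Finset.mem_filter, Finset.mem_Icc]
          intro h
          exact h.2 hjfix
        -- properties of y = s j x
        have hy1 : C.δ (j+1) false (C.s j x) = C.s j x := C.sym_type j x hjfix
        have hby : ∀ m, n' + 1 ≤ m → C.δ m false (C.s j x) = C.s j x := by
          intro m hm
          rw [C.sym_face2 m j false x (by omega) (by omega) hjfix, hb' m (by omega)]
        have hsuby : (Finset.Icc 1 n').filter
            (fun k => C.δ k false (C.s j x) ≠ C.s j x) ⊆
            insert j (F.erase (j+1)) := by
          intro k hk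
          simp only [Finset.mem_filter, Finset.mem_Icc] at hk
          obtain ⟨⟨hk1, hkn'⟩, hkfree⟩ := hk
          by_cases hkj : k = j
          · exact Finset.mem_insert.mpr (Or.inl hkj)
          have hkj1 : k ≠ j + 1 := by
            intro h
            rw [h] at hkfree
            exact hkfree hy1
          have hkx : C.δ k false x ≠ x := by
            intro h
            apply hkfree
            rw [C.sym_face2 k j false x hkj hkj1 hjfix, h]
          refine Finset.mem_insert.mpr (Or.inr (Finset.mem_erase.mpr ⟨hkj1, ?_⟩))
          rw [hFdef]
          simp only [Finset.mem_filter, Finset.mem_Icc]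
          exact ⟨⟨hk1, by omega⟩, hkx⟩
        have herase : (F.erase (j+1)).sum id + (j+1) = F.sum id :=
          Finset.sum_erase_add F id hj1F
        have hjnerase : j ∉ F.erase (j+1) := fun h => hjnF (Finset.mem_erase.mp h).2
        have hsumins : (insert j (F.erase (j+1))).sum id =
            j + (F.erase (j+1)).sum id := Finset.sum_insert hjnerase
        have hFsum : F.sum id ≤ M + 1 := by
          have : F.sum id ≤ ((Finset.Icc 1 n).filter
              (fun j => C.δ j false x ≠ x)).sum id := le_of_eq (by rw [hFdef])
          omega
        have hsumy : ((Finset.Icc 1 n').filter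
            (fun k => C.δ k false (C.s j x) ≠ C.s j x)).sum id ≤ M := by
          have h1 := Finset.sum_le_sum_of_subset hsuby (f := id)
          simp only [Function.id_def] at h1 herase hsumins hFsum ⊢
          omega
        have hcardy : ((Finset.Icc 1 n').filter
            (fun k => C.δ k false (C.s j x) ≠ C.s j x)).card ≤ N + 1 := by
          have h1 := Finset.card_le_card hsuby
          have h2 : (insert j (F.erase (j+1))).card ≤ (F.erase (j+1)).card + 1 :=
            Finset.card_insert_le _ _
          have h3 : (F.erase (j+1)).card = F.card - 1 :=
            Finset.card_erase_of_mem hj1F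
          have h4 : 1 ≤ F.card := Finset.card_pos.mpr ⟨j+1, hj1F⟩
          omega
        by_cases hi2 : i = j + 1
        · obtain ⟨z, hz⟩ := ihM j n' (C.s j x) hj1 (by omega) hby hcardy hsumy
          obtain ⟨w, hw⟩ := transport_succ C j hjfix hz
          exact ⟨w, by rw [hi2]; exact hw⟩
        · obtain ⟨z, hz⟩ := ihM i n' (C.s j x) hi hin' hby hcardy hsumy
          exact transport_ne C j i hij hi2 hjfix hz

end Aux

theorem omega_zero_every_ri_inv {S : Type*} (C : CubicalOmegaPCat S 0) :
    ∀ (i : ℕ), 1 ≤ i → ∀ x : S, ∃ y : S, riInv C.δ C.comp i x y := by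
  classical
  intro i hi x
  obtain ⟨k, hk⟩ := C.fin_dim x
  have hb : ∀ m, max i k + 1 ≤ m → C.δ m false x = x := fun m hm =>
    hk m (by omega)
  exact key_induction C
    ((Finset.Icc 1 (max i k)).filter (fun j => C.δ j false x ≠ x)).card
    (((Finset.Icc 1 (max i k)).filter (fun j => C.δ j false x ≠ x)).sum id)
    i (max i k) x hi (le_max_left i k) hb le_rfl le_rfl
end
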